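/- (Elimination theorem) Let K be a field, let R = K[t₁,…,tₛ,x₁,…,xₙ], and let σ be an elimination order for the variables t₁,…,tₛ. Let I ⊆ R be an ideal and G a σ-Gröbner basis of I. Then the set G ∩ K[x₁,…,xₙ] of elements of G involving only the variables x₁,…,xₙ generates the elimination ideal I ∩ K[x₁,…,xₙ] as an ideal of K[x₁,…,xₙ], where K[x₁,…,xₙ] is regarded as a subring of R via the natural inclusion. -/

import Mathlib

open MvPolynomial

/-- A monomial order on the exponent vectors `ν →₀ ℕ`: a linear order compatible with
addition and having `0` as least element. -/
structure MonomialOrd (ν : Type) where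
  le : (ν →₀ ℕ) → (ν →₀ ℕ) → Prop
  le_refl : ∀ a, le a a
  le_trans : ∀ a b c, le a b → le b c → le a c
  le_antisymm : ∀ a b, le a b → le b a → a = b
  le_total : ∀ a b, le a b ∨ le b a
  add_le_add : ∀ a b c, le a b → le (a + c) (b + c)
  zero_le : ∀ a, le 0 a

/-- `a` is the σ-largest exponent vector in the support of `f`
(so `X^a` is the σ-leading monomial of `f`). -/
def IsLeadingExp {K : Type} [Field K] {ν : Type} (σ : MonomialOrd ν)
    (f : MvPolynomial ν K) (a : ν →₀ ℕ) : Prop :=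
  a ∈ f.support ∧ ∀ b ∈ f.support, σ.le b a

/-- The leading-term ideal `LT_σ(I)`: the ideal generated by the σ-leading monomials of the
nonzero elements of `I`. -/
noncomputable def ltIdeal {K : Type} [Field K] {ν : Type} (σ : MonomialOrd ν)
    (I : Ideal (MvPolynomial ν K)) : Ideal (MvPolynomial ν K) :=
  Ideal.span { m | ∃ f ∈ I, ∃ a, IsLeadingExp σ f a ∧ m = monomial a (1 : K) }

/-- `G` is a σ-Gröbner basis of `I`: a finite subset of `I` whose σ-leading monomials
generate `LT_σ(I)`. -/
def IsGroebnerBasis {K : Type} [Field K] {ν : Type} (σ : MonomialOrd ν)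
    (I : Ideal (MvPolynomial ν K)) (G : Finset (MvPolynomial ν K)) : Prop :=
  ↑G ⊆ (I : Set (MvPolynomial ν K)) ∧
    Ideal.span { m | ∃ g ∈ G, ∃ a, IsLeadingExp σ g a ∧ m = monomial a (1 : K) } = ltIdeal σ I

/-- `σ` is an elimination order for the first block of variables (the `t`-variables,
indexed by `Sum.inl`): any monomial in which some `t`-variable occurs is σ-greater than any
monomial involving only the `x`-variables. -/
def IsElimOrder {s n : ℕ} (σ : MonomialOrd (Fin s ⊕ Fin n)) : Prop :=
  ∀ u v : Fin s ⊕ Fin n →₀ ℕ,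
    (∃ j : Fin s, 0 < u (Sum.inl j)) → (∀ j : Fin s, v (Sum.inl j) = 0) →
      σ.le v u ∧ v ≠ u

/-! Let `J ⊆ R` be the ideal generated by `G ∩ K[x]`. Since `σ` refines the divisibility order,
Dickson's lemma makes it a well-order, so every `x`-only `f ∈ I` lies in `J` by induction on its
leading exponent `a`: the monomial `X^a` lies in `LT_σ(I)`, hence is divisible by the leading
monomial `X^b` of some `g ∈ G`. As `b ≤ a` is `t`-free and `σ` is an elimination order, every
monomial of `g` is `t`-free, so `g ∈ J`; cancelling the leading term of `f` by a monomial multiple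
of `g` leaves an `x`-only element of `I` with smaller leading exponent. The retraction
`killCompl : R → K[x]` of the inclusion then carries `f ∈ J` back to the ideal of `K[x]`
generated by `G ∩ K[x]`. -/

namespace MvPolynomial

variable {R : Type} [CommSemiring R] {α β : Type}

theorem mem_supported_iff_support_subset {p : MvPolynomial β R} {V : Set β} :
    p ∈ supported R V ↔ ∀ u ∈ p.support, ↑u.support ⊆ V := by
  classical
  rw [mem_supported]
  constructor
  · intro h u hu i hi
    exact h (mem_vars_iff_mem_support i |>.mpr ⟨u, hu, hi⟩)
  · intro h i hi
    obtain ⟨u, hu, hiu⟩ := (mem_vars_iff_mem_support i).mp hi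
    exact h u hu hiu

theorem range_rename_eq_supported {f : α → β} (hf : Function.Injective f) :
    (rename f : MvPolynomial α R →ₐ[R] MvPolynomial β R).range = supported R (Set.range f) := by
  classical
  ext p
  rw [AlgHom.mem_range, mem_supported]
  constructor
  · rintro ⟨q, rfl⟩
    refine (Finset.coe_subset.mpr (vars_rename f q)).trans ?_
    simp
  · exact exists_rename_eq_of_vars_subset_range p f hf

theorem image_rename_preimage {f : α → β} (hf : Function.Injective f)
    (T : Set (MvPolynomial β R)) :
    rename f '' (rename f ⁻¹' T) = T ∩ supported R (Set.range f) := by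
  rw [Set.image_preimage_eq_inter_range, ← AlgHom.coe_range, range_rename_eq_supported hf]

theorem mem_span_of_rename_mem_span_image {f : α → β} (hf : Function.Injective f)
    {S : Set (MvPolynomial α R)} {p : MvPolynomial α R}
    (h : rename f p ∈ Ideal.span (rename f '' S)) : p ∈ Ideal.span S := by
  have := Ideal.mem_map_of_mem (killCompl hf) h
  rw [Ideal.map_span, Set.image_image] at this
  simpa only [killCompl_rename_app, Set.image_id'] using this

end MvPolynomial

namespace MonomialOrd

variable {ν : Type} (σ : MonomialOrd ν)

def lt (a b : ν →₀ ℕ) : Prop := σ.le a b ∧ a ≠ b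

theorem le_of_pointwise_le {a b : ν →₀ ℕ} (h : a ≤ b) : σ.le a b := by
  obtain ⟨c, rfl⟩ := exists_add_of_le h
  simpa [add_comm] using σ.add_le_add 0 c a (σ.zero_le c)

theorem wellFounded_lt [Finite ν] : WellFounded σ.lt := by
  have : IsPreorder (ν →₀ ℕ) σ.le := { refl := σ.le_refl, trans := σ.le_trans }
  have hwqo : WellQuasiOrdered σ.le := fun f ↦ by
    obtain ⟨m, n, hmn, hle⟩ := wellQuasiOrdered_le f
    exact ⟨m, n, hmn, σ.le_of_pointwise_le hle⟩
  exact hwqo.wellFounded.mono fun a b hab ↦ ⟨hab.1, fun hba ↦ hab.2 (σ.le_antisymm a b hab.1 hba)⟩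

theorem exists_mem_forall_le {s : Finset (ν →₀ ℕ)} (hs : s.Nonempty) :
    ∃ a ∈ s, ∀ b ∈ s, σ.le b a := by
  classical
  induction hs using Finset.Nonempty.cons_induction with
  | singleton a => exact ⟨a, by simp, by simp [σ.le_refl]⟩
  | cons c s hc hs ih =>
    obtain ⟨a, has, ha⟩ := ih
    rcases σ.le_total c a with hca | hac
    · exact ⟨a, by simp [has], by simpa [hca] using ha⟩
    · exact ⟨c, by simp, by simpa [σ.le_refl] using fun b hb ↦ σ.le_trans _ _ _ (ha b hb) hac⟩

theorem exists_isLeadingExp {K : Type} [Field K] {f : MvPolynomial ν K} (hf : f ≠ 0) :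
    ∃ a, IsLeadingExp σ f a :=
  σ.exists_mem_forall_le (support_nonempty.mpr hf)

end MonomialOrd

section Reduction

variable {K : Type} [Field K] {ν : Type} {σ : MonomialOrd ν}

theorem IsGroebnerBasis.exists_isLeadingExp_le {I : Ideal (MvPolynomial ν K)}
    {G : Finset (MvPolynomial ν K)} (hG : IsGroebnerBasis σ I G) {f : MvPolynomial ν K}
    (hf : f ∈ I) {a : ν →₀ ℕ} (ha : IsLeadingExp σ f a) :
    ∃ g ∈ G, ∃ b, IsLeadingExp σ g b ∧ b ≤ a := by
  classical
  have hmem : monomial a (1 : K) ∈ ltIdeal σ I := Ideal.subset_span ⟨f, hf, a, ha, rfl⟩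
  have himage : { m | ∃ g ∈ G, ∃ b, IsLeadingExp σ g b ∧ m = monomial b (1 : K) } =
      (monomial · (1 : K)) '' { b | ∃ g ∈ G, IsLeadingExp σ g b } := by
    ext m
    constructor
    · rintro ⟨g, hg, b, hb, rfl⟩
      exact ⟨b, ⟨g, hg, hb⟩, rfl⟩
    · rintro ⟨b, ⟨g, hg, hb⟩, rfl⟩
      exact ⟨g, hg, b, hb, rfl⟩
  rw [← hG.2, himage, mem_ideal_span_monomial_image] at hmem
  obtain ⟨b, ⟨g, hg, hb⟩, hba⟩ := hmem a (by simp)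
  exact ⟨g, hg, b, hb, hba⟩

theorem IsLeadingExp.lt_of_mem_support_sub_monomial_mul {f g : MvPolynomial ν K}
    {a b : ν →₀ ℕ} (ha : IsLeadingExp σ f a) (hb : IsLeadingExp σ g b) (hba : b ≤ a) {u : ν →₀ ℕ}
    (hu : u ∈ (f - monomial (a - b) (coeff a f / coeff b g) * g).support) : σ.lt u a := by
  have hgb : coeff b g ≠ 0 := mem_support_iff.mp hb.1
  have hne : u ≠ a := by
    rintro rfl
    apply mem_support_iff.mp hu
    rw [coeff_sub, coeff_monomial_mul', if_pos tsub_le_self, tsub_tsub_cancel_of_le hba,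
      div_mul_cancel₀ _ hgb, sub_self]
  refine ⟨?_, hne⟩
  by_cases hfu : u ∈ f.support
  · exact ha.2 u hfu
  · have hqg : coeff u (monomial (a - b) (coeff a f / coeff b g) * g) ≠ 0 := by
      rw [mem_support_iff, coeff_sub, notMem_support_iff.mp hfu, zero_sub, neg_ne_zero] at hu
      exact hu
    rw [coeff_monomial_mul'] at hqg
    split_ifs at hqg with hle
    · have hz := σ.add_le_add _ _ (a - b) (hb.2 _ (mem_support_iff.mpr (right_ne_zero_of_mul hqg)))
      rwa [tsub_add_cancel_of_le hle, add_comm, tsub_add_cancel_of_le hba] at hz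
    · exact absurd rfl hqg

end Reduction

namespace MonomialOrd

variable {ν : Type} (σ : MonomialOrd ν)

/-- `σ` is an elimination order for the variables outside `V`. -/
def IsElimOrderFor (V : Set ν) : Prop :=
  ∀ u v : ν →₀ ℕ, ↑v.support ⊆ V → ¬ ↑u.support ⊆ V → σ.lt v u

variable {σ} {K : Type} [Field K] {V : Set ν}

theorem IsElimOrderFor.mem_supported_of_isLeadingExp (hσ : σ.IsElimOrderFor V)
    {g : MvPolynomial ν K} {b : ν →₀ ℕ} (hb : IsLeadingExp σ g b) (hbV : ↑b.support ⊆ V) :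
    g ∈ supported K V := by
  refine mem_supported_iff_support_subset.mpr fun u hu ↦ ?_
  by_contra huV
  obtain ⟨hbu, hne⟩ := hσ u b hbV huV
  exact hne (σ.le_antisymm _ _ hbu (hb.2 u hu))

theorem IsElimOrderFor.mem_span_inter_supported [Finite ν] (hσ : σ.IsElimOrderFor V)
    {I : Ideal (MvPolynomial ν K)} {G : Finset (MvPolynomial ν K)} (hG : IsGroebnerBasis σ I G)
    {f : MvPolynomial ν K} (hfI : f ∈ I) (hfV : f ∈ supported K V) :
    f ∈ Ideal.span (↑G ∩ ↑(supported K V)) := by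
  set J := Ideal.span (↑G ∩ ↑(supported K V) : Set (MvPolynomial ν K))
  suffices h : ∀ a, ∀ f ∈ I, f ∈ supported K V → IsLeadingExp σ f a → f ∈ J by
    obtain rfl | hf0 := eq_or_ne f 0
    · exact J.zero_mem
    · obtain ⟨a, ha⟩ := σ.exists_isLeadingExp hf0
      exact h a f hfI hfV ha
  intro a
  induction a using σ.wellFounded_lt.induction with
  | _ a ih =>
  intro f hfI hfV ha
  obtain ⟨g, hgG, b, hb, hba⟩ := hG.exists_isLeadingExp_le hfI ha
  have haV : ↑a.support ⊆ V := mem_supported_iff_support_subset.mp hfV a ha.1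
  have hgV : g ∈ supported K V :=
    hσ.mem_supported_of_isLeadingExp hb ((Finset.coe_subset.mpr (Finsupp.support_mono hba)).trans haV)
  set q := monomial (a - b) (coeff a f / coeff b g)
  have hqV : q ∈ supported K V :=
    mem_supported_iff_support_subset.mpr fun u hu ↦ by
      rw [Finset.mem_singleton.mp (support_monomial_subset hu)]
      exact (Finset.coe_subset.mpr (Finsupp.support_mono tsub_le_self)).trans haV
  have hrem : f - q * g ∈ J := by
    obtain h0 | hne := eq_or_ne (f - q * g) 0
    · exact h0 ▸ J.zero_mem
    obtain ⟨a', ha'⟩ := σ.exists_isLeadingExp hne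
    exact ih a' (ha.lt_of_mem_support_sub_monomial_mul hb hba ha'.1) _
      (I.sub_mem hfI (I.mul_mem_left q (hG.1 hgG)))
      (Subalgebra.sub_mem _ hfV (Subalgebra.mul_mem _ hqV hgV)) ha'
  simpa using J.add_mem hrem (J.mul_mem_left q (Ideal.subset_span ⟨hgG, hgV⟩))

end MonomialOrd

theorem support_subset_range_inr_iff {α β M : Type} [Zero M] (u : α ⊕ β →₀ M) :
    (u.support : Set (α ⊕ β)) ⊆ Set.range Sum.inr ↔ ∀ j, u (Sum.inl j) = 0 := by
  constructor
  · intro h j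
    by_contra hj
    obtain ⟨i, hi⟩ := h (Finsupp.mem_support_iff.mpr hj)
    exact Sum.inr_ne_inl hi
  · rintro h (j | i) hu
    · exact absurd (h j) (Finsupp.mem_support_iff.mp hu)
    · exact ⟨i, rfl⟩

theorem IsElimOrder.isElimOrderFor_range_inr {s n : ℕ} {σ : MonomialOrd (Fin s ⊕ Fin n)}
    (hσ : IsElimOrder σ) : σ.IsElimOrderFor (Set.range Sum.inr) := by
  intro u v hv hu
  rw [support_subset_range_inr_iff] at hu hv
  obtain ⟨j, hj⟩ := not_forall.mp hu
  exact hσ u v ⟨j, Nat.pos_of_ne_zero hj⟩ hv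

/-- elimination theorem: if `σ` is an elimination order for `t₁,…,tₛ` and `G`
is a σ-Gröbner basis of `I ⊆ K[t₁,…,tₛ,x₁,…,xₙ]`, then the elements of `G` lying in
`K[x₁,…,xₙ]` generate the elimination ideal `I ∩ K[x₁,…,xₙ]`, where `K[x₁,…,xₙ]` is embedded
in `R` via `rename Sum.inr`. -/
theorem elimination_theorem {K : Type} [Field K] {s n : ℕ}
    (σ : MonomialOrd (Fin s ⊕ Fin n)) (hσ : IsElimOrder σ)
    (I : Ideal (MvPolynomial (Fin s ⊕ Fin n) K))
    (G : Finset (MvPolynomial (Fin s ⊕ Fin n) K)) (hG : IsGroebnerBasis σ I G) :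
    Ideal.span { f : MvPolynomial (Fin n) K |
        MvPolynomial.rename (Sum.inr : Fin n → Fin s ⊕ Fin n) f ∈ G } =
      Ideal.comap (MvPolynomial.rename (Sum.inr : Fin n → Fin s ⊕ Fin n)).toRingHom I := by
  refine le_antisymm (Ideal.span_le.mpr fun f hf ↦ hG.1 hf) fun f hf ↦ ?_
  have hf_span := hσ.isElimOrderFor_range_inr.mem_span_inter_supported hG (Ideal.mem_comap.mp hf)
    ((range_rename_eq_supported Sum.inr_injective).le (AlgHom.mem_range_self _ f))
  rw [← image_rename_preimage Sum.inr_injective] at hf_span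
  exact mem_span_of_rename_mem_span_image Sum.inr_injective hf_span
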